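/- For any n ≥ 3, there exists a boolean function κ : 𝔹^n → 𝔹 and a point v ∈ 𝔹^n such that feature n is irrelevant for the instance (v, κ(v)) yet its Shapley value Sv(n) is nonzero. -/

import Mathlib

open Finset

/-- `X` is a weak abductive explanation (weak AXp) for classifier `κ` at point `v`:
every point agreeing with `v` on `X` gets the same prediction as `v`. -/
def weakAXp {n : ℕ} (κ : (Fin n → Bool) → Bool) (v : Fin n → Bool)
    (X : Finset (Fin n)) : Prop :=
  ∀ x : Fin n → Bool, (∀ i ∈ X, x i = v i) → κ x = κ v

/-- `X` is an AXp: a subset-minimal weak AXp. -/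
def AXp {n : ℕ} (κ : (Fin n → Bool) → Bool) (v : Fin n → Bool)
    (X : Finset (Fin n)) : Prop :=
  weakAXp κ v X ∧ ∀ X' ⊂ X, ¬ weakAXp κ v X'

/-- `Y` is a weak contrastive explanation (weak CXp) for `κ` at `v`:
some point agreeing with `v` outside `Y` gets a different prediction. -/
def weakCXp {n : ℕ} (κ : (Fin n → Bool) → Bool) (v : Fin n → Bool)
    (Y : Finset (Fin n)) : Prop :=
  ∃ x : Fin n → Bool, (∀ i ∉ Y, x i = v i) ∧ κ x ≠ κ v

/-- `Y` is a CXp: a subset-minimal weak CXp. -/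
def CXp {n : ℕ} (κ : (Fin n → Bool) → Bool) (v : Fin n → Bool)
    (Y : Finset (Fin n)) : Prop :=
  weakCXp κ v Y ∧ ∀ Y' ⊂ Y, ¬ weakCXp κ v Y'

/-- A feature is relevant if it occurs in some AXp. -/
def Relevant {n : ℕ} (κ : (Fin n → Bool) → Bool) (v : Fin n → Bool) (i : Fin n) : Prop :=
  ∃ X, AXp κ v X ∧ i ∈ X

/-- A feature is irrelevant if it occurs in no AXp. -/
def Irrelevant {n : ℕ} (κ : (Fin n → Bool) → Bool) (v : Fin n → Bool) (i : Fin n) : Prop :=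
  ¬ Relevant κ v i

/-- `phi κ v S` : average value of `κ` over points agreeing with `v` on `S`
(uniform distribution). -/
noncomputable def phi {n : ℕ} (κ : (Fin n → Bool) → Bool) (v : Fin n → Bool)
    (S : Finset (Fin n)) : ℝ :=
  (1 / 2 ^ (n - S.card)) *
    ∑ x ∈ Finset.univ.filter (fun x : Fin n → Bool => ∀ i ∈ S, x i = v i),
      (if κ x then (1 : ℝ) else 0)

/-- Shapley value of feature `i` for classifier `κ` at point `v`. -/
noncomputable def Sv {n : ℕ} (κ : (Fin n → Bool) → Bool) (v : Fin n → Bool)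
    (i : Fin n) : ℝ :=
  ∑ S ∈ (Finset.univ.erase i).powerset,
    ((S.card.factorial * (n - S.card - 1).factorial : ℝ) / n.factorial) *
      (phi κ v (insert i S) - phi κ v S)


/-!
The witness is `κ x = x₀ ∨ (x₁ ∧ x₍ₙ₋₁₎)` at the point `v` with `v₀` true and every other
feature false. Feature `0` is in every weak AXp and `{0}` already is one, so `{0}` is the only
AXp and feature `n - 1` is irrelevant. Since `v₍ₙ₋₁₎` is false and `κ` is monotone in
feature `n - 1`, fixing that feature to its value in `v` never raises the expected value `phi`.
It strictly lowers it when nothing else is fixed, because at the point whose only true feature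
is `1`, switching feature `n - 1` on turns `κ` on. As all Shapley weights are positive,
`Sv κ v (n - 1) < 0`.
-/

open Function

variable {n : ℕ} {κ : (Fin n → Bool) → Bool} {v : Fin n → Bool}

section Explanations

lemma mem_of_weakAXp_of_update_ne {a : Fin n} {X : Finset (Fin n)}
    (hflip : κ (update v a (!v a)) ≠ κ v) (hX : weakAXp κ v X) : a ∈ X := by
  by_contra ha
  refine hflip (hX _ fun j hj => update_of_ne ?_ _ _)
  rintro rfl
  exact ha hj

lemma irrelevant_of_forall_weakAXp_mem {a i : Fin n} (hsingle : weakAXp κ v {a})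
    (hmem : ∀ X, weakAXp κ v X → a ∈ X) (hia : i ≠ a) : Irrelevant κ v i := by
  rintro ⟨X, ⟨hX, hmin⟩, hiX⟩
  have hne : {a} ≠ X := by
    rintro rfl
    exact hia (mem_singleton.mp hiX)
  exact hmin {a} (Finset.ssubset_iff_subset_ne.mpr ⟨singleton_subset_iff.mpr (hmem X hX), hne⟩)
    hsingle

end Explanations

section Shapley

def agreeing (v : Fin n → Bool) (S : Finset (Fin n)) : Finset (Fin n → Bool) :=
  univ.filter fun x => ∀ j ∈ S, x j = v j

@[simp]
lemma mem_agreeing {S : Finset (Fin n)} {x : Fin n → Bool} :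
    x ∈ agreeing v S ↔ ∀ j ∈ S, x j = v j := by
  simp [agreeing]

lemma phi_eq_sum_agreeing (S : Finset (Fin n)) :
    phi κ v S = (2 ^ (n - #S))⁻¹ * ∑ x ∈ agreeing v S, if κ x then (1 : ℝ) else 0 := by
  rw [phi, one_div, agreeing]

lemma sum_agreeing_eq_sum_agreeing_insert {i : Fin n} {S : Finset (Fin n)} (hi : i ∉ S)
    (f : (Fin n → Bool) → ℝ) :
    ∑ x ∈ agreeing v S, f x =
      ∑ x ∈ agreeing v (insert i S), (f x + f (update x i (!v i))) := by
  have hS (x : Fin n → Bool) (b : Bool) : ∀ j ∈ S, update x i b j = x j := fun j hj =>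
    update_of_ne (ne_of_mem_of_not_mem hj hi) _ _
  have hback : ∀ x ∈ (agreeing v S).filter (fun x => ¬x i = v i),
      update (update x i (v i)) i (!v i) = x := fun x hx => by
    rw [update_idem, ← Bool.eq_not_of_ne (mem_filter.mp hx).2, update_eq_self]
  rw [sum_add_distrib, ← sum_filter_add_sum_filter_not (agreeing v S) (fun x => x i = v i)]
  congr 1
  · congr 1
    ext x
    simp [and_comm]
  · refine sum_nbij' (update · i (v i)) (update · i (!v i)) ?_ ?_ ?_ ?_ ?_
    · intro x hx
      simp only [mem_filter, mem_agreeing] at hx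
      simpa using fun j hj => (hS x _ j hj).trans (hx.1 j hj)
    · intro x hx
      simp only [mem_agreeing, forall_mem_insert] at hx
      simpa using fun j hj => (hS x _ j hj).trans (hx.2 j hj)
    · exact hback
    · intro x hx
      rw [update_idem, ← (mem_agreeing.mp hx i (mem_insert_self i S)), update_eq_self]
    · intro x hx
      rw [hback x hx]

lemma phi_sub_phi_insert {i : Fin n} {S : Finset (Fin n)} (hi : i ∉ S) :
    phi κ v S - phi κ v (insert i S) =
      (2 ^ (n - #S))⁻¹ * ∑ x ∈ agreeing v (insert i S),
        ((if κ (update x i (!v i)) then (1 : ℝ) else 0) - if κ x then 1 else 0) := by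
  have hcard : n - #S = n - #(insert i S) + 1 := by
    have := card_lt_univ_of_notMem hi
    rw [card_insert_of_notMem hi]
    simp only [Fintype.card_fin] at this
    omega
  rw [phi_eq_sum_agreeing, phi_eq_sum_agreeing, sum_agreeing_eq_sum_agreeing_insert hi,
    sum_add_distrib, sum_sub_distrib, hcard, pow_succ]
  ring

lemma Sv_neg_of_phi_insert_le {i : Fin n}
    (hle : ∀ S, i ∉ S → phi κ v (insert i S) ≤ phi κ v S)
    {S₀ : Finset (Fin n)} (hS₀ : i ∉ S₀) (hlt : phi κ v (insert i S₀) < phi κ v S₀) :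
    Sv κ v i < 0 := by
  have hweight (S : Finset (Fin n)) :
      0 < ((#S).factorial * (n - #S - 1).factorial : ℝ) / n.factorial := by
    positivity
  have hmem {S : Finset (Fin n)} : S ∈ (univ.erase i).powerset ↔ i ∉ S := by
    simp [subset_erase]
  refine sum_neg' (fun S hS => mul_nonpos_of_nonneg_of_nonpos (hweight S).le ?_)
    ⟨S₀, hmem.mpr hS₀, mul_neg_of_pos_of_neg (hweight S₀) (sub_neg.mpr hlt)⟩
  exact sub_nonpos.mpr (hle S (hmem.mp hS))

variable {i : Fin n} (hmono : ∀ x, κ x = true → κ (update x i (!v i)) = true)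
include hmono

lemma indicator_update_sub_indicator_nonneg (x : Fin n → Bool) :
    0 ≤ (if κ (update x i (!v i)) then (1 : ℝ) else 0) - if κ x then 1 else 0 := by
  split_ifs <;> simp_all

lemma phi_insert_le_of_monotone {S : Finset (Fin n)} (hi : i ∉ S) :
    phi κ v (insert i S) ≤ phi κ v S := by
  rw [← sub_nonneg, phi_sub_phi_insert hi]
  exact mul_nonneg (by positivity)
    (sum_nonneg fun x _ => indicator_update_sub_indicator_nonneg hmono x)

lemma phi_insert_lt_of_monotone {S : Finset (Fin n)} (hi : i ∉ S) {x₀ : Fin n → Bool}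
    (hx₀ : x₀ ∈ agreeing v (insert i S)) (h0 : κ x₀ = false)
    (h1 : κ (update x₀ i (!v i)) = true) :
    phi κ v (insert i S) < phi κ v S := by
  rw [← sub_pos, phi_sub_phi_insert hi]
  exact mul_pos (by positivity) (sum_pos'
    (fun x _ => indicator_update_sub_indicator_nonneg hmono x) ⟨x₀, hx₀, by simp [h0, h1]⟩)

lemma Sv_neg_of_monotone {x₀ : Fin n → Bool} (hx₀ : x₀ i = v i) (h0 : κ x₀ = false)
    (h1 : κ (update x₀ i (!v i)) = true) : Sv κ v i < 0 :=
  Sv_neg_of_phi_insert_le (fun _ hi => phi_insert_le_of_monotone hmono hi) (notMem_empty i)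
    (phi_insert_lt_of_monotone hmono (notMem_empty i) (by simpa using hx₀) h0 h1)

end Shapley

section Example

variable {a b c : Fin n}

lemma irrelevant_or_and (hab : a ≠ b) (hac : a ≠ c) :
    Irrelevant (fun x => x a || x b && x c) (fun j => decide (j = a)) c := by
  refine irrelevant_of_forall_weakAXp_mem (a := a) ?_ (fun X hX => ?_) hac.symm
  · intro x hx
    simp [hx a (mem_singleton_self a)]
  · refine mem_of_weakAXp_of_update_ne ?_ hX
    simp [update_apply, hab.symm]

lemma Sv_or_and_neg (hab : a ≠ b) (hac : a ≠ c) (hbc : b ≠ c) :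
    Sv (fun x => x a || x b && x c) (fun j => decide (j = a)) c < 0 := by
  refine Sv_neg_of_monotone (x₀ := fun j => decide (j = b)) (fun x hx => ?_) ?_ ?_ ?_
  · simp only [Bool.or_eq_true, Bool.and_eq_true] at hx
    simpa [update_of_ne hac, update_of_ne hbc, hac.symm] using hx.imp_right And.left
  all_goals simp [update_apply, hab, hac.symm, hbc.symm]

end Example

theorem stmt5 (n : ℕ) (hn : 3 ≤ n) :
    ∃ (κ : (Fin n → Bool) → Bool) (v : Fin n → Bool),
      Irrelevant κ v ⟨n - 1, by omega⟩ ∧ Sv κ v ⟨n - 1, by omega⟩ ≠ 0 := by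
  have hab : (⟨0, by omega⟩ : Fin n) ≠ ⟨1, by omega⟩ := by simp
  have hac : (⟨0, by omega⟩ : Fin n) ≠ ⟨n - 1, by omega⟩ := by simp; omega
  have hbc : (⟨1, by omega⟩ : Fin n) ≠ ⟨n - 1, by omega⟩ := by simp; omega
  exact ⟨_, _, irrelevant_or_and hab hac, (Sv_or_and_neg hab hac hbc).ne⟩
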